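/- Let $\mu_1, \dots, \mu_{k+1}$ be positive reals with $\mu_1 \le \cdots \le \mu_{k+1}$ satisfying $\sum_{i=1}^k (\mu_{k+1}-\mu_i)^2 \le \frac{4}{n}\sum_{i=1}^k \mu_i(\mu_{k+1}-\mu_i)$ for some real $n > 0$. Then $\mu_{k+1} \le (1 + \tfrac{4}{n})\Lambda_k$, where $\Lambda_k = \frac{1}{k}\sum_{i=1}^k \mu_i$. -/

import Mathlib

/-!
Write `Λ` and `t` for the mean and the mean square of `μ₁, …, μ_k`. Dividing the hypothesis by `k`
turns it into the quadratic inequality `μ² - (2 + a) Λ μ + (1 + a) t ≤ 0` in `μ = μ_{k+1}`,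
with `a = 4/n`. Since `Λ² ≤ t`, the same holds with `t` replaced by `Λ²`, and then the quadratic
factors as `(μ - Λ) (μ - (1 + a) Λ)`, so `μ` is at most its larger root `(1 + a) Λ`.
-/

open Finset

lemma le_one_add_mul_of_quadratic_le_zero {a Λ t μ : ℝ} (ha : 0 ≤ a) (hΛ : 0 ≤ Λ)
    (ht : Λ ^ 2 ≤ t) (h : μ ^ 2 - (2 + a) * Λ * μ + (1 + a) * t ≤ 0) :
    μ ≤ (1 + a) * Λ := by
  have hfactor : (μ - Λ) * (μ - (1 + a) * Λ) ≤ 0 := by nlinarith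
  by_contra! hμ
  nlinarith [mul_nonneg ha hΛ]

namespace Finset

variable {ι : Type*} {s : Finset ι} {f : ι → ℝ}

lemma sum_sub_sq_eq_card_mul (c : ℝ) :
    ∑ i ∈ s, (c - f i) ^ 2 =
      #s * (c ^ 2 - 2 * ((∑ i ∈ s, f i) / #s) * c + (∑ i ∈ s, f i ^ 2) / #s) := by
  obtain rfl | hs := s.eq_empty_or_nonempty
  · simp
  have hcard : (#s : ℝ) ≠ 0 := by positivity
  simp only [sub_sq, sum_add_distrib, sum_sub_distrib, sum_const, nsmul_eq_mul, ← mul_sum]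
  field_simp

lemma sum_mul_sub_eq_card_mul (c : ℝ) :
    ∑ i ∈ s, f i * (c - f i) =
      #s * ((∑ i ∈ s, f i) / #s * c - (∑ i ∈ s, f i ^ 2) / #s) := by
  obtain rfl | hs := s.eq_empty_or_nonempty
  · simp
  have hcard : (#s : ℝ) ≠ 0 := by positivity
  simp only [mul_sub, sum_sub_distrib, ← sum_mul, sq]
  field_simp

lemma le_one_add_mul_mean_of_sum_sub_sq_le (hs : s.Nonempty) (hf : ∀ i ∈ s, 0 ≤ f i)
    {a c : ℝ} (ha : 0 ≤ a)
    (h : ∑ i ∈ s, (c - f i) ^ 2 ≤ a * ∑ i ∈ s, f i * (c - f i)) :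
    c ≤ (1 + a) * ((∑ i ∈ s, f i) / #s) := by
  set Λ := (∑ i ∈ s, f i) / #s
  set t := (∑ i ∈ s, f i ^ 2) / #s
  have hcard : (0 : ℝ) < #s := by positivity
  rw [sum_sub_sq_eq_card_mul, sum_mul_sub_eq_card_mul, mul_left_comm] at h
  have hquad : c ^ 2 - (2 + a) * Λ * c + (1 + a) * t ≤ 0 := by
    nlinarith [le_of_mul_le_mul_left h hcard]
  exact le_one_add_mul_of_quadratic_le_zero ha (div_nonneg (sum_nonneg hf) hcard.le)
    sum_div_card_sq_le_sum_sq_div_card hquad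

end Finset

theorem mu_succ_le_general (k : ℕ) (hk : 1 ≤ k) (n : ℝ) (hn : 0 < n) (mu : ℕ → ℝ)
    (hpos : ∀ i, 1 ≤ i → i ≤ k + 1 → 0 < mu i)
    (hineq : ∑ i ∈ Finset.Icc 1 k, (mu (k + 1) - mu i) ^ 2
      ≤ 4 / n * ∑ i ∈ Finset.Icc 1 k, mu i * (mu (k + 1) - mu i)) :
    mu (k + 1) ≤ (1 + 4 / n) * ((1 / (k : ℝ)) * ∑ i ∈ Finset.Icc 1 k, mu i) := by
  have hnonneg : ∀ i ∈ Icc 1 k, 0 ≤ mu i := fun i hi =>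
    (hpos i (mem_Icc.1 hi).1 ((mem_Icc.1 hi).2.trans k.le_succ)).le
  have h := le_one_add_mul_mean_of_sum_sub_sq_le (nonempty_Icc.2 hk) hnonneg
    (div_nonneg zero_le_four hn.le) hineq
  rwa [Nat.card_Icc, Nat.add_sub_cancel, ← one_div_mul_eq_div (k : ℝ)] at h

/-- Inequality (4.15): if positive reals `μ₁ ≤ ⋯ ≤ μ_{k+1}` satisfy
`∑_{i=1}^k (μ_{k+1}-μ_i)² ≤ (4/n) ∑_{i=1}^k μ_i (μ_{k+1}-μ_i)` for some `n > 0`,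
then `μ_{k+1} ≤ (1+4/n) Λ_k`, where `Λ_k` is the mean of `μ₁, …, μ_k`. -/
theorem mu_succ_le (k : ℕ) (hk : 1 ≤ k) (n : ℝ) (hn : 0 < n) (mu : ℕ → ℝ)
    (hpos : ∀ i, 1 ≤ i → i ≤ k + 1 → 0 < mu i)
    (hmono : ∀ i j, 1 ≤ i → i ≤ j → j ≤ k + 1 → mu i ≤ mu j)
    (hineq : ∑ i ∈ Finset.Icc 1 k, (mu (k + 1) - mu i) ^ 2
      ≤ 4 / n * ∑ i ∈ Finset.Icc 1 k, mu i * (mu (k + 1) - mu i)) :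
    mu (k + 1) ≤ (1 + 4 / n) * ((1 / (k : ℝ)) * ∑ i ∈ Finset.Icc 1 k, mu i) :=
  mu_succ_le_general k hk n hn mu hpos hineq
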